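/- arXiv:2412.18861 — 4 statements merged into one kernel-verified Lean document; each statement's English description precedes it below -/
import Mathlib

section
/- For every ε > 0 there exist a finite simple connected graph G with at least one edge and an edge-weight function ω : E(G) → ℝ with ω(e) ≥ 0 for all e and ω(G) > 0, such that t_ω(G) < ε · u(G), where u(G) := (|V(G)| − 1)/|E(G)| is the uniform ratio of G. -/
open scoped Classical

noncomputable section

/-- Total weight of a graph: the sum of the weights of its edges. -/
def totalWeight {V : Type*} [Fintype V] (G : SimpleGraph V) (w : Sym2 V → ℝ) : ℝ :=
  ∑ e ∈ G.edgeFinset, w e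

/-- The maximum, over all spanning trees `T` of `G` (subgraphs on the full vertex
set that are trees), of the total weight of `T`. -/
def maxTreeWeight {V : Type*} [Fintype V] (G : SimpleGraph V) (w : Sym2 V → ℝ) : ℝ :=
  sSup {x | ∃ T : SimpleGraph V, T ≤ G ∧ T.IsTree ∧ x = ∑ e ∈ T.edgeFinset, w e}

/-!
Take a clique on a set `S` of `k` vertices, put weight `1` on its edges and `0` elsewhere, and
attach `k²` further vertices by a star. A spanning tree is acyclic, so it uses at most `k - 1`
edges inside `S`, while the total weight is `k(k - 1)/2`: the weighting ratio is at most `2/k`.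
The star keeps the graph sparse: a spanning tree has `k²` edges and the graph at most `2k²`, so
the uniform ratio is at least `1/2`.
-/

open Finset

namespace SimpleGraph

variable {V : Type*}

lemma card_edgeFinset_induce_eq_card_inter_sym2 [Fintype V] (G : SimpleGraph V)
    (S : Finset V) : #(G.induce (S : Set V)).edgeFinset = #(G.edgeFinset ∩ S.sym2) := by
  have h := G.map_edgeFinset_induce (s := (S : Set V))
  rw [Finset.toFinset_coe] at h
  rw [← h, card_map]
  convert rfl

lemma IsAcyclic.card_edgeFinset_add_one_le [Fintype V] [Nonempty V] {H : SimpleGraph V}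
    (hH : H.IsAcyclic) : #H.edgeFinset + 1 ≤ Fintype.card V := by
  obtain ⟨T, hHT, -, hT⟩ := connected_top.exists_isTree_le_of_le_of_isAcyclic le_top hH
  rw [← hT.card_edgeFinset]
  exact Nat.succ_le_succ (card_le_card (edgeFinset_mono hHT))

lemma IsAcyclic.card_edgeFinset_inter_sym2_add_one_le [Fintype V] {T : SimpleGraph V}
    (hT : T.IsAcyclic) {S : Finset V} (hS : S.Nonempty) : #(T.edgeFinset ∩ S.sym2) + 1 ≤ #S := by
  have : Nonempty (S : Set V) := hS.coe_sort
  rw [← card_edgeFinset_induce_eq_card_inter_sym2, ← Fintype.card_coe S]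
  convert (hT.induce S).card_edgeFinset_add_one_le
  simp

lemma IsClique.card_edgeFinset_inter_sym2 [Fintype V] {G : SimpleGraph V} {S : Finset V}
    (hS : G.IsClique (S : Set V)) : #(G.edgeFinset ∩ S.sym2) = (#S).choose 2 := by
  rw [← card_edgeFinset_induce_eq_card_inter_sym2]
  convert card_edgeFinset_top_eq_card_choose_two (V := (S : Set V))
  · exact induce_eq_top.mpr hS
  · simp

lemma card_edgeFinset_fromEdgeSet_sym2_le (S : Finset V) :
    #(fromEdgeSet (S.sym2 : Set (Sym2 V))).edgeFinset ≤ (#S + 1).choose 2 := by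
  rw [← card_sym2]
  refine card_le_card fun e he => ?_
  rw [mem_edgeFinset, edgeSet_fromEdgeSet] at he
  exact he.1

def starWithClique (r : V) (S : Finset V) : SimpleGraph V :=
  starGraph r ⊔ fromEdgeSet (S.sym2 : Set (Sym2 V))

lemma isClique_starWithClique (r : V) (S : Finset V) :
    (starWithClique r S).IsClique (S : Set V) :=
  fun _ hx _ hy hxy => Or.inr ⟨mk_mem_sym2_iff.mpr ⟨hx, hy⟩, hxy⟩

lemma connected_starWithClique (r : V) (S : Finset V) : (starWithClique r S).Connected :=
  (connected_starGraph r).mono le_sup_left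

lemma card_edgeFinset_starWithClique_le [Fintype V] (r : V) (S : Finset V) :
    #(starWithClique r S).edgeFinset ≤ Fintype.card V - 1 + (#S + 1).choose 2 := by
  have hstar : #(starGraph r).edgeFinset + 1 = Fintype.card V := by
    convert (isTree_starGraph r).card_edgeFinset
  have hclique : #(fromEdgeSet (S.sym2 : Set (Sym2 V))).edgeFinset ≤ (#S + 1).choose 2 := by
    convert card_edgeFinset_fromEdgeSet_sym2_le S
  calc _ ≤ #(starGraph r).edgeFinset + #(fromEdgeSet (S.sym2 : Set (Sym2 V))).edgeFinset := by
        refine (card_le_card fun e he => ?_).trans (card_union_le _ _)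
        rw [mem_edgeFinset] at he
        simpa [starWithClique] using he
    _ ≤ _ := by omega

lemma edgeFinset_starWithClique_nonempty [Fintype V] [Nontrivial V] (r : V) (S : Finset V) :
    (starWithClique r S).edgeFinset.Nonempty := by
  obtain ⟨v, hv⟩ := exists_ne r
  exact ⟨s(r, v), mem_edgeFinset.mpr (Or.inl (starGraph_center_adj hv.symm))⟩

lemma half_le_card_sub_one_div_card_edgeFinset_starWithClique [Fintype V] (r : V)
    {S : Finset V} (hS : S.Nonempty) (hV : Fintype.card V = #S * #S + 1) :
    1 / 2 ≤ ((Fintype.card V : ℝ) - 1) / #(starWithClique r S).edgeFinset := by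
  have hk : 1 ≤ #S := hS.card_pos
  have : Nontrivial V := Fintype.one_lt_card_iff_nontrivial.mp (by rw [hV]; nlinarith)
  have hkR : (1 : ℝ) ≤ #S := by exact_mod_cast hk
  have hE := card_edgeFinset_starWithClique_le r S
  rw [hV, Nat.add_sub_cancel] at hE
  have hE' := (Nat.cast_le (α := ℝ)).mpr hE
  push_cast [Nat.cast_choose_two] at hE'
  have hpos : (0 : ℝ) < #(starWithClique r S).edgeFinset := by
    exact_mod_cast (edgeFinset_starWithClique_nonempty r S).card_pos
  rw [hV, le_div_iff₀ hpos]
  push_cast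
  nlinarith

end SimpleGraph

open SimpleGraph

section IndicatorWeight

variable {V : Type*} [Fintype V]

lemma sum_edgeFinset_indicator_sym2 (H : SimpleGraph V) (S : Finset V) :
    ∑ e ∈ H.edgeFinset, (S.sym2 : Set (Sym2 V)).indicator 1 e =
      (#(H.edgeFinset ∩ S.sym2) : ℝ) := by
  rw [sum_indicator_eq_sum_inter]
  simp

lemma maxTreeWeight_indicator_sym2_le (G : SimpleGraph V) {S : Finset V} (hS : S.Nonempty) :
    maxTreeWeight G ((S.sym2 : Set (Sym2 V)).indicator 1) ≤ #S - 1 := by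
  refine Real.sSup_le ?_ (by simpa using hS.card_pos)
  rintro x ⟨T, -, hT, rfl⟩
  rw [sum_edgeFinset_indicator_sym2, le_sub_iff_add_le]
  exact_mod_cast hT.isAcyclic.card_edgeFinset_inter_sym2_add_one_le hS

lemma totalWeight_indicator_sym2 {G : SimpleGraph V} {S : Finset V}
    (hS : G.IsClique (S : Set V)) :
    totalWeight G ((S.sym2 : Set (Sym2 V)).indicator 1) = (#S).choose 2 := by
  rw [totalWeight, sum_edgeFinset_indicator_sym2, hS.card_edgeFinset_inter_sym2]

lemma maxTreeWeight_div_totalWeight_indicator_sym2_le {G : SimpleGraph V} {S : Finset V}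
    (hS : G.IsClique (S : Set V)) (hS2 : 2 ≤ #S) :
    maxTreeWeight G ((S.sym2 : Set (Sym2 V)).indicator 1) /
      totalWeight G ((S.sym2 : Set (Sym2 V)).indicator 1) ≤ 2 / #S := by
  have hk : (2 : ℝ) ≤ #S := by exact_mod_cast hS2
  rw [totalWeight_indicator_sym2 hS, Nat.cast_choose_two,
    div_le_div_iff₀ (by nlinarith) (by linarith)]
  nlinarith [maxTreeWeight_indicator_sym2_le G (card_pos.mp (by omega) : S.Nonempty)]

end IndicatorWeight

/-- For every `ε > 0` there are a finite simple connected graph `G` with at least one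
edge and a nonnegative edge-weight function `w` with positive total weight, whose
weighting ratio `t_w(G)` is less than `ε` times the uniform ratio
`u(G) = (|V(G)| - 1)/|E(G)|`. -/
theorem ratio_gap (ε : ℝ) (hε : 0 < ε) :
    ∃ (n : ℕ) (G : SimpleGraph (Fin n)) (w : Sym2 (Fin n) → ℝ),
      G.Connected ∧ G.edgeFinset.Nonempty ∧
      (∀ e ∈ G.edgeFinset, 0 ≤ w e) ∧ 0 < totalWeight G w ∧
      maxTreeWeight G w / totalWeight G w <
        ε * (((Fintype.card (Fin n) : ℝ) - 1) / (G.edgeFinset.card : ℝ)) := by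
  obtain ⟨k, hk⟩ := exists_nat_gt (max (4 / ε) 1)
  have hk4 : 4 / ε < k := (le_max_left _ _).trans_lt hk
  have hk2 : 2 ≤ k := by exact_mod_cast (le_max_right _ _).trans_lt hk
  obtain ⟨S, -, hS⟩ := exists_subset_card_eq (s := (univ : Finset (Fin (k * k + 1)))) (n := k)
    (by rw [card_univ, Fintype.card_fin]; nlinarith)
  have hclique := isClique_starWithClique 0 S
  have htotal : 0 < totalWeight (starWithClique 0 S) ((S.sym2 : Set (Sym2 _)).indicator 1) := by
    rw [totalWeight_indicator_sym2 hclique, hS]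
    exact_mod_cast Nat.choose_pos hk2
  have hratio := maxTreeWeight_div_totalWeight_indicator_sym2_le hclique (by omega)
  have huniform := half_le_card_sub_one_div_card_edgeFinset_starWithClique 0
    (card_pos.mp (by omega) : S.Nonempty) (by rw [Fintype.card_fin, hS])
  rw [hS] at hratio
  refine ⟨k * k + 1, starWithClique 0 S, (S.sym2 : Set (Sym2 _)).indicator 1,
    connected_starWithClique 0 S, nonempty_of_sum_ne_zero htotal.ne',
    fun e _ => Set.indicator_nonneg (fun _ _ => zero_le_one) e, htotal, ?_⟩
  refine hratio.trans_lt ?_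
  calc 2 / (k : ℝ) < ε * (1 / 2) := by
        rw [div_lt_iff₀ hε] at hk4
        rw [div_lt_iff₀ (by positivity)]; linarith
    _ ≤ _ := mul_le_mul_of_nonneg_left huniform hε.le
end
end

section
/- Let G be a finite simple connected graph with at least one edge. Then the infimum, over all edge-weight functions ω : E(G) → ℝ with ω(e) ≥ 0 for all e and ω(G) > 0, of the weighting ratio t_ω(G) equals the minimum, over all edge-weight functions ω : E(G) → {0, 1} with ω(G) > 0, of t_ω(G). In particular, this infimum is attained by a {0,1}-valued weight function. -/
open scoped Classical

noncomputable section

/-!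
For a set `S` of edges let `r(S) = |V| - c(S)`, where `c(S)` counts the components of the graph
spanned by `S`. Since a forest with `m` edges has `|V| - m` components, a spanning tree meets `S`
in at most `r(S)` edges, and a spanning tree extending a spanning forest of `S` meets it in exactly
`r(S)`. So the `{0,1}`-weighting with support `S` has ratio `r(S) / |S|`; let `ρ` be the least of
these ratios. A nonnegative `w` is `w' + a • 1_S`, where `S` is its support, `a` its least positive
value, and `w'` has smaller support inside `S`. If `T'` is a spanning tree with `w'(T') ≥ ρ w'(G)`,
extend `T' ∩ S` to a spanning forest of `S` and then to a spanning tree `T`: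
`w(T) ≥ w'(T') + a r(S) ≥ ρ (w'(G) + a |S|) = ρ w(G)`.
-/

open Finset

namespace SimpleGraph

variable {V : Type*}

theorem Reachable.eq_of_forall_adj {G : SimpleGraph V} {β : Sort*} {f : V → β}
    (hf : ∀ x y, G.Adj x y → f x = f y) {x y : V} (h : G.Reachable x y) : f x = f y := by
  obtain ⟨p⟩ := h
  induction p with
  | nil => rfl
  | cons hxy _ ih => exact (hf _ _ hxy).trans ih

theorem card_connectedComponent_sup_edge_add_one [Finite V] {F : SimpleGraph V} {u v : V}
    (huv : ¬F.Reachable u v) :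
    Nat.card (F ⊔ edge u v).ConnectedComponent + 1 = Nat.card F.ConnectedComponent := by
  set cv := F.connectedComponentMk v
  have hu : F.connectedComponentMk u ≠ cv := fun h => huv (ConnectedComponent.exact h)
  -- merge the component of `v` into that of `u`
  let g : V → {c : F.ConnectedComponent // c ≠ cv} := fun x =>
    if hx : F.Reachable x v then ⟨_, hu⟩
    else ⟨F.connectedComponentMk x, fun h => hx (ConnectedComponent.exact h)⟩
  have hg : ∀ x y, (F ⊔ edge u v).Adj x y → g x = g y := by
    rintro x y (hxy | hxy)
    · have : F.Reachable x v ↔ F.Reachable y v :=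
        ⟨hxy.reachable.symm.trans, hxy.reachable.trans⟩
      by_cases hx : F.Reachable x v
      · simp [g, hx, this.1 hx]
      · simp [g, hx, this.not.1 hx, hxy.reachable]
    · obtain ⟨⟨rfl, rfl⟩ | ⟨rfl, rfl⟩, -⟩ := (edge_adj ..).1 hxy <;> simp [g, huv]
  have e : (F ⊔ edge u v).ConnectedComponent ≃ {c : F.ConnectedComponent // c ≠ cv} :=
    { toFun := ConnectedComponent.lift g fun x y p _ => p.reachable.eq_of_forall_adj hg
      invFun := fun c => c.1.map (Hom.ofLE le_sup_left)
      left_inv := by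
        refine ConnectedComponent.ind fun x => ?_
        by_cases hx : F.Reachable x v
        · simp only [ConnectedComponent.lift_mk, g, dif_pos hx, ConnectedComponent.map_mk,
            Hom.coe_ofLE, id, ConnectedComponent.eq]
          have huv' : (F ⊔ edge u v).Adj u v :=
            Or.inr ((edge_adj ..).2 ⟨Or.inl ⟨rfl, rfl⟩, fun h => huv (h ▸ .rfl)⟩)
          exact huv'.reachable.trans (hx.mono le_sup_left).symm
        · simp [g, hx]
      right_inv := by
        rintro ⟨c, hc⟩
        induction c using ConnectedComponent.ind with
        | h x =>
        have hx : ¬F.Reachable x v := fun h => hc (ConnectedComponent.sound h)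
        simp [g, hx] }
  rw [Nat.card_congr e, ← Finite.card_option, Nat.card_congr (Equiv.optionSubtypeNe cv)]

theorem IsAcyclic.card_edgeFinset_add_card_connectedComponent [Fintype V] {F : SimpleGraph V}
    [Fintype F.edgeSet] (hF : F.IsAcyclic) :
    #F.edgeFinset + Nat.card F.ConnectedComponent = Fintype.card V := by
  induction hn : #F.edgeFinset generalizing F with
  | zero =>
    rw [card_eq_zero, edgeFinset_eq_empty] at hn
    subst hn
    have hbot : Function.Bijective (⊥ : SimpleGraph V).connectedComponentMk :=
      ⟨fun x y h => reachable_bot.1 (ConnectedComponent.exact h), Quot.mk_surjective⟩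
    rw [zero_add, ← Nat.card_eq_fintype_card, Nat.card_congr (Equiv.ofBijective _ hbot)]
  | succ n ih =>
    obtain ⟨e, he⟩ := card_pos.1 (hn.symm ▸ n.succ_pos : 0 < #F.edgeFinset)
    induction e with | h u v =>
    rw [mem_edgeFinset, mem_edgeSet] at he
    set F' := F.deleteEdges {s(u, v)}
    have hF' : ¬F'.Reachable u v := isBridge_iff.1 (isAcyclic_iff_forall_adj_isBridge.1 hF he)
    have hsup : F' ⊔ edge u v = F := sdiff_sup_cancel ((edge_le_iff _).2 (Or.inr he))
    have hcard : #F'.edgeFinset = n := by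
      have : F'.edgeFinset = F.edgeFinset.erase s(u, v) := by
        ext e
        simp [F', edgeSet_deleteEdges, and_comm]
      rw [this, card_erase_of_mem (by simpa), hn, Nat.add_sub_cancel]
    have hcc := card_connectedComponent_sup_edge_add_one hF'
    rw [hsup] at hcc
    have := @ih F' _ (hF.anti sdiff_le) hcard
    omega

section Fintype

variable [Fintype V]

def graphicRank (S : Finset (Sym2 V)) : ℕ :=
  Fintype.card V - Nat.card (fromEdgeSet (S : Set (Sym2 V))).ConnectedComponent

theorem edgeFinset_fromEdgeSet_of_subset {G : SimpleGraph V} {S : Finset (Sym2 V)}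
    (hS : S ⊆ G.edgeFinset) : (fromEdgeSet (S : Set (Sym2 V))).edgeFinset = S := by
  ext e
  simp only [mem_edgeFinset, edgeSet_fromEdgeSet, Set.mem_sdiff, mem_coe, Sym2.mem_diagSet,
    and_iff_left_iff_imp]
  exact fun he => G.not_isDiag_of_mem_edgeSet (mem_edgeFinset.1 (hS he))

theorem IsAcyclic.card_edgeFinset_inter_le_graphicRank {T : SimpleGraph V} (hT : T.IsAcyclic)
    (S : Finset (Sym2 V)) : #(T.edgeFinset ∩ S) ≤ graphicRank S := by
  set F := fromEdgeSet ((T.edgeFinset ∩ S : Finset (Sym2 V)) : Set (Sym2 V))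
  have hFT : F ≤ T := (fromEdgeSet_le _).2 fun e he => mem_edgeFinset.1 (mem_inter.1 he.1).1
  have hFS : F ≤ fromEdgeSet S := fromEdgeSet_mono (by simp)
  have hcount := (hT.anti hFT).card_edgeFinset_add_card_connectedComponent
  rw [edgeFinset_fromEdgeSet_of_subset inter_subset_left] at hcount
  have := ConnectedComponent.card_le_card_of_le hFS
  unfold graphicRank
  omega

theorem Connected.exists_isTree_graphicRank_le {G T₀ : SimpleGraph V} (hG : G.Connected)
    (hT₀ : T₀.IsAcyclic) {S : Finset (Sym2 V)} (hS : S ⊆ G.edgeFinset) :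
    ∃ T ≤ G, T.IsTree ∧ T₀.edgeFinset ∩ S ⊆ T.edgeFinset ∧
      graphicRank S ≤ #(T.edgeFinset ∩ S) := by
  set H := fromEdgeSet (S : Set (Sym2 V))
  set F₀ := fromEdgeSet ((T₀.edgeFinset ∩ S : Finset (Sym2 V)) : Set (Sym2 V))
  have hHG : H ≤ G := (fromEdgeSet_le _).2 fun e he => mem_edgeFinset.1 (hS he.1)
  have hF₀T₀ : F₀ ≤ T₀ :=
    (fromEdgeSet_le _).2 fun e he => mem_edgeFinset.1 (mem_inter.1 he.1).1
  obtain ⟨F, hF₀F, hFH, hF, hreach⟩ := H.exists_isAcyclic_reachable_eq_le_of_le_of_isAcyclic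
    (fromEdgeSet_mono (by simp) : F₀ ≤ H) (hT₀.anti hF₀T₀)
  obtain ⟨T, hFT, hTG, hT⟩ := hG.exists_isTree_le_of_le_of_isAcyclic (hFH.trans hHG) hF
  refine ⟨T, hTG, hT, ?_, ?_⟩
  · calc T₀.edgeFinset ∩ S = F₀.edgeFinset :=
          (edgeFinset_fromEdgeSet_of_subset inter_subset_left).symm
      _ ⊆ F.edgeFinset := edgeFinset_mono hF₀F
      _ ⊆ T.edgeFinset := edgeFinset_mono hFT
  · have hcount := hF.card_edgeFinset_add_card_connectedComponent
    have hcc : Nat.card F.ConnectedComponent = Nat.card H.ConnectedComponent := by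
      rw [ConnectedComponent, ConnectedComponent, hreach]
    have hFS : F.edgeFinset ⊆ T.edgeFinset ∩ S := by
      refine subset_inter (edgeFinset_mono hFT) ?_
      rw [← edgeFinset_fromEdgeSet_of_subset hS]
      exact edgeFinset_mono hFH
    have := card_le_card hFS
    change Fintype.card V - Nat.card H.ConnectedComponent ≤ _
    omega

end Fintype

end SimpleGraph

open SimpleGraph

theorem Finset.sum_ite_mem_one {α : Type*} [DecidableEq α] (X S : Finset α) :
    ∑ e ∈ X, (if e ∈ S then (1 : ℝ) else 0) = #(X ∩ S) := by
  rw [sum_boole, filter_mem_eq_inter]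

theorem Finset.sum_add_mul_ite_mem {α : Type*} [DecidableEq α] (X S : Finset α) (w : α → ℝ)
    (a : ℝ) :
    ∑ e ∈ X, (w e + a * if e ∈ S then 1 else 0) = ∑ e ∈ X, w e + a * #(X ∩ S) := by
  rw [sum_add_distrib, ← mul_sum, sum_ite_mem_one]

section Weight

variable {V : Type*} [Fintype V]

theorem sum_le_maxTreeWeight {G T : SimpleGraph V} {w : Sym2 V → ℝ}
    (hw : ∀ e ∈ G.edgeFinset, 0 ≤ w e) (hTG : T ≤ G) (hT : T.IsTree) :
    ∑ e ∈ T.edgeFinset, w e ≤ maxTreeWeight G w := by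
  refine le_csSup ⟨totalWeight G w, ?_⟩ ⟨T, hTG, hT, rfl⟩
  rintro _ ⟨T', hT'G, -, rfl⟩
  exact sum_le_sum_of_subset_of_nonneg (edgeFinset_mono hT'G) fun e he _ => hw e he

theorem maxTreeWeight_indicator {G : SimpleGraph V} (hG : G.Connected) {S : Finset (Sym2 V)}
    (hS : S ⊆ G.edgeFinset) :
    maxTreeWeight G (fun e => if e ∈ S then 1 else 0) = graphicRank S := by
  refine IsGreatest.csSup_eq ⟨?_, ?_⟩
  · obtain ⟨T, hTG, hT, -, hle⟩ := hG.exists_isTree_graphicRank_le isAcyclic_bot hS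
    refine ⟨T, hTG, hT, ?_⟩
    rw [sum_ite_mem_one, le_antisymm hle (hT.isAcyclic.card_edgeFinset_inter_le_graphicRank S)]
  · rintro _ ⟨T, -, hT, rfl⟩
    rw [sum_ite_mem_one]
    exact_mod_cast hT.isAcyclic.card_edgeFinset_inter_le_graphicRank S

theorem exists_isTree_mul_totalWeight_add_le {G T' : SimpleGraph V} (hG : G.Connected) {ρ : ℝ}
    (hρ : ∀ S ⊆ G.edgeFinset, ρ * #S ≤ graphicRank S) {S : Finset (Sym2 V)}
    (hS : S ⊆ G.edgeFinset) {a : ℝ} (ha : 0 ≤ a) {w : Sym2 V → ℝ}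
    (hw : ∀ e ∈ G.edgeFinset, 0 ≤ w e) (hwS : ∀ e ∈ G.edgeFinset, e ∉ S → w e = 0)
    (hT'G : T' ≤ G) (hT' : T'.IsTree)
    (hT'w : ρ * totalWeight G w ≤ ∑ e ∈ T'.edgeFinset, w e) :
    ∃ T ≤ G, T.IsTree ∧ ρ * totalWeight G (fun e => w e + a * if e ∈ S then 1 else 0) ≤
      ∑ e ∈ T.edgeFinset, (w e + a * if e ∈ S then 1 else 0) := by
  obtain ⟨T, hTG, hT, hT'T, hrank⟩ := hG.exists_isTree_graphicRank_le hT'.isAcyclic hS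
  have hwT : ∑ e ∈ T'.edgeFinset, w e ≤ ∑ e ∈ T.edgeFinset, w e :=
    calc ∑ e ∈ T'.edgeFinset, w e = ∑ e ∈ T'.edgeFinset ∩ S, w e := by
          refine (sum_subset inter_subset_left fun e he heS => ?_).symm
          exact hwS e (edgeFinset_mono hT'G he) fun h => heS (mem_inter.2 ⟨he, h⟩)
      _ ≤ ∑ e ∈ T.edgeFinset, w e :=
          sum_le_sum_of_subset_of_nonneg hT'T fun e he _ => hw e (edgeFinset_mono hTG he)
  refine ⟨T, hTG, hT, ?_⟩
  rw [totalWeight, sum_add_mul_ite_mem, sum_add_mul_ite_mem, inter_eq_right.2 hS, mul_add,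
    mul_left_comm, ← totalWeight]
  exact add_le_add (hT'w.trans hwT)
    (mul_le_mul_of_nonneg_left ((hρ S hS).trans (by exact_mod_cast hrank)) ha)

theorem exists_isTree_mul_totalWeight_le {G : SimpleGraph V} (hG : G.Connected) {ρ : ℝ}
    (hρ : ∀ S ⊆ G.edgeFinset, ρ * #S ≤ graphicRank S) (w : Sym2 V → ℝ)
    (hw : ∀ e ∈ G.edgeFinset, 0 ≤ w e) :
    ∃ T ≤ G, T.IsTree ∧ ρ * totalWeight G w ≤ ∑ e ∈ T.edgeFinset, w e := by
  induction hn : #{e ∈ G.edgeFinset | 0 < w e} using Nat.strong_induction_on generalizing w with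
  | _ n ih =>
  set S := {e ∈ G.edgeFinset | 0 < w e}
  have hwS : ∀ e ∈ G.edgeFinset, e ∉ S → w e = 0 := fun e he heS =>
    le_antisymm (not_lt.1 fun h => heS (mem_filter.2 ⟨he, h⟩)) (hw e he)
  rcases S.eq_empty_or_nonempty with hS | hS
  · obtain ⟨T, hTG, hT⟩ := hG.exists_isTree_le
    refine ⟨T, hTG, hT, ?_⟩
    rw [totalWeight, sum_eq_zero fun e he => hwS e he (hS ▸ notMem_empty e), mul_zero]
    exact sum_nonneg fun e he => hw e (edgeFinset_mono hTG he)
  obtain ⟨f, hfS, hmin⟩ := S.exists_min_image w hS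
  set a := w f
  set w' : Sym2 V → ℝ := fun e => w e - a * if e ∈ S then 1 else 0
  have hw' : ∀ e ∈ G.edgeFinset, 0 ≤ w' e := by
    intro e he
    by_cases heS : e ∈ S
    · simpa [w', heS] using hmin e heS
    · simpa [w', heS] using hw e he
  have hw'S : ∀ e ∈ G.edgeFinset, e ∉ S → w' e = 0 := fun e he heS => by
    simp [w', heS, hwS e he heS]
  have hsupp : #{e ∈ G.edgeFinset | 0 < w' e} < n := by
    rw [← hn]
    refine card_lt_card ((ssubset_iff_of_subset fun e he => ?_).2 ⟨f, hfS, fun hf => ?_⟩)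
    · obtain ⟨he, hpos⟩ := mem_filter.1 he
      by_contra heS
      exact hpos.ne' (hw'S e he heS)
    · simp [w', hfS, a] at hf
  obtain ⟨T', hT'G, hT', hT'w⟩ := ih _ hsupp w' hw' rfl
  have hw_eq : (fun e => w' e + a * if e ∈ S then 1 else 0) = w := funext fun e => by simp [w']
  rw [← hw_eq]
  exact exists_isTree_mul_totalWeight_add_le hG hρ (filter_subset _ _) (mem_filter.1 hfS).2.le
    hw' hw'S hT'G hT' hT'w
end Weight

/-- **0-1 Weighting Function Lemma.** For a finite simple connected graph `G` with at
least one edge, the infimum of the weighting ratio `t_w(G)` over all nonnegative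
edge-weight functions with positive total weight is attained by a `{0,1}`-valued
weight function; in particular it equals the minimum over `{0,1}`-valued weight
functions. -/
theorem zero_one_weighting {V : Type*} [Fintype V] (G : SimpleGraph V)
    (hG : G.Connected) (hE : G.edgeFinset.Nonempty) :
    ∃ w01 : Sym2 V → ℝ,
      (∀ e ∈ G.edgeFinset, w01 e = 0 ∨ w01 e = 1) ∧ 0 < totalWeight G w01 ∧
      IsLeast
        {x | ∃ w : Sym2 V → ℝ, (∀ e ∈ G.edgeFinset, 0 ≤ w e) ∧ 0 < totalWeight G w ∧
          x = maxTreeWeight G w / totalWeight G w}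
        (maxTreeWeight G w01 / totalWeight G w01) := by
  obtain ⟨S₀, hS₀, hmin⟩ := exists_min_image {S ∈ G.edgeFinset.powerset | S.Nonempty}
    (fun S => (graphicRank S : ℝ) / #S) ⟨G.edgeFinset, by simpa using hE⟩
  rw [mem_filter, mem_powerset] at hS₀
  set w01 : Sym2 V → ℝ := fun e => if e ∈ S₀ then 1 else 0
  have htotal : totalWeight G w01 = #S₀ := by
    rw [totalWeight, sum_ite_mem_one, inter_eq_right.2 hS₀.1]
  have hpos : 0 < totalWeight G w01 := by
    rw [htotal]
    exact_mod_cast hS₀.2.card_pos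
  have hρ : ∀ S ⊆ G.edgeFinset, graphicRank S₀ / #S₀ * (#S : ℝ) ≤ graphicRank S := by
    intro S hS
    rcases S.eq_empty_or_nonempty with rfl | hSne
    · simp
    · exact (le_div_iff₀ (by exact_mod_cast hSne.card_pos)).1 (hmin S (by simp [hS, hSne]))
  refine ⟨w01, fun e _ => by by_cases e ∈ S₀ <;> simp [w01, *], hpos,
    ⟨w01, fun e _ => by by_cases e ∈ S₀ <;> simp [w01, *], hpos, rfl⟩, ?_⟩
  rintro _ ⟨w, hw, hwpos, rfl⟩
  obtain ⟨T, hTG, hT, hTw⟩ := exists_isTree_mul_totalWeight_le hG hρ w hw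
  rw [htotal, maxTreeWeight_indicator hG hS₀.1, le_div_iff₀ hwpos]
  exact hTw.trans (sum_le_maxTreeWeight hw hTG hT)
end
end

section
/- Let G be a finite simple connected graph with at least two vertices. Then the infimum, over all edge-weight functions ω : E(G) → ℝ with ω(e) ≥ 0 for all e and ω(G) > 0, of the weighting ratio t_ω(G) equals the minimum over all S ∈ Co(G) of (|S| − 1)/e(G[S]), and this minimum is attained. -/
open scoped Classical

noncomputable section

/-- The number of edges of the induced subgraph `G[S]`, i.e. the number of edges of
`G` with both endpoints in `S`. -/
def inducedEdgeCount {V : Type*} [Fintype V] (G : SimpleGraph V) (S : Finset V) : ℕ :=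
  (G.edgeFinset.filter (fun e => ∀ v ∈ e, v ∈ S)).card

/-!
Let `t` be the minimum of `(|S| - 1) / e(G[S])` over `S ∈ Co(G)`. Summing over the components of
a subgraph `K ≤ G` gives the rank bound `t · |E(K)| ≤ |V| - c(K)`, the number of edges of a
spanning forest of `K`. Kruskal's algorithm builds a spanning tree `T` that contains a spanning
forest of every upper level set `{e | c ≤ w e}` of the weight; since `w` is a nonnegative
combination of the indicators of these level sets, `w(T) ≥ t · w(G)`. This is proved by induction
on the number of distinct weights, truncating the largest weight to the second largest. Equality
holds for the indicator weight of `G[S]` with `S` a minimiser, because a tree has at most `|S| - 1`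
edges inside `S`.
-/

open Finset

theorem Finset.sum_eq_sum_min_add_mul_card_filter {ι : Type*} (A : Finset ι) {w : ι → ℝ}
    {c m : ℝ} (hmc : m ≤ c) (hw : ∀ i ∈ A, w i ≤ m ∨ w i = c) :
    ∑ i ∈ A, w i = ∑ i ∈ A, min (w i) m + (c - m) * #(A.filter (w · = c)) := by
  have hsplit : ∀ i ∈ A, w i = min (w i) m + if w i = c then c - m else 0 := by
    intro i hi
    rcases hw i hi with h | h
    · by_cases hc : w i = c
      · obtain rfl : m = c := le_antisymm hmc (hc ▸ h)
        simp [hc]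
      · simp [h, hc]
    · simp [h, min_eq_right hmc]
  rw [sum_congr rfl hsplit, sum_add_distrib, sum_ite, sum_const_zero, sum_const, nsmul_eq_mul,
    add_zero, mul_comm]

namespace SimpleGraph

section

variable {V : Type*}

theorem card_connectedComponent_eq_of_reachable_eq {B K : SimpleGraph V}
    (h : B.Reachable = K.Reachable) :
    Nat.card B.ConnectedComponent = Nat.card K.ConnectedComponent := by
  unfold ConnectedComponent
  rw [h]

theorem Connected.card_connectedComponent {G : SimpleGraph V} (hG : G.Connected) :
    Nat.card G.ConnectedComponent = 1 :=
  have := hG.preconnected.subsingleton_connectedComponent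
  have : Nonempty G.ConnectedComponent := ⟨G.connectedComponentMk hG.nonempty.some⟩
  Nat.card_eq_one_iff_unique.mpr ⟨inferInstance, inferInstance⟩

end

variable {V : Type*} [Fintype V]

theorem card_edgeFinset_induce (K : SimpleGraph V) (s : Set V) [Fintype s]
    [Fintype (K.induce s).edgeSet] :
    #(K.induce s).edgeFinset = inducedEdgeCount K s.toFinset := by
  classical
  have h := congrArg card (map_edgeFinset_induce (G := K) (s := s))
  rw [card_map] at h
  convert h using 1
  · exact congrArg card (by ext; simp)
  unfold inducedEdgeCount
  rw [← filter_mem_eq_inter]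
  refine congrArg card (filter_congr fun e _ => ?_)
  simp [mem_sym2_iff]

theorem sum_card_supp_toFinset (K : SimpleGraph V) :
    ∑ C : K.ConnectedComponent, #C.supp.toFinset = Fintype.card V := by
  rw [← card_univ, card_eq_sum_card_fiberwise (f := K.connectedComponentMk) (t := univ)
    (fun _ _ => mem_univ _)]
  refine sum_congr rfl fun C _ => congrArg card ?_
  ext v
  simp [ConnectedComponent.mem_supp_iff]

theorem sum_inducedEdgeCount_supp (K : SimpleGraph V) :
    ∑ C : K.ConnectedComponent, inducedEdgeCount K C.supp.toFinset = #K.edgeFinset := by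
  rw [card_eq_sum_card_fiberwise (f := fun e => K.connectedComponentMk e.out.1) (t := univ)
    (fun _ _ => mem_univ _)]
  refine sum_congr rfl fun C _ => congrArg card (filter_congr fun e he => ?_)
  have hreach : ∀ u ∈ e, ∀ v ∈ e, K.Reachable u v := by
    induction e using Sym2.ind with
    | _ a b =>
      have hab : K.Adj a b := mem_edgeFinset.mp he
      simp only [Sym2.mem_iff]
      rintro u (rfl | rfl) v (rfl | rfl)
      exacts [Reachable.rfl, hab.reachable, hab.symm.reachable, Reachable.rfl]
  simp only [Set.mem_toFinset, ConnectedComponent.mem_supp_iff]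
  refine ⟨fun h => h _ (Sym2.out_fst_mem e), fun h v hv => ?_⟩
  rw [← h]
  exact (ConnectedComponent.sound (hreach _ (Sym2.out_fst_mem e) v hv)).symm

theorem induce_supp_toFinset_connected (K : SimpleGraph V) (C : K.ConnectedComponent) :
    (K.induce (C.supp.toFinset : Set V)).Connected := by
  rw [Set.coe_toFinset]
  exact C.connected_toSimpleGraph

theorem IsAcyclic.inducedEdgeCount_supp_add_one {B : SimpleGraph V} (hB : B.IsAcyclic)
    (C : B.ConnectedComponent) :
    inducedEdgeCount B C.supp.toFinset + 1 = #C.supp.toFinset := by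
  have hedges : #C.toSimpleGraph.edgeFinset = inducedEdgeCount B C.supp.toFinset := by
    convert card_edgeFinset_induce B C.supp <;> rfl
  have hverts : Fintype.card C = #C.supp.toFinset := by
    rw [Set.toFinset_card]
    exact Fintype.card_congr (Equiv.subtypeEquivRight fun _ => Iff.rfl)
  rw [← hedges, ← hverts]
  exact (hB.isTree_connectedComponent C).card_edgeFinset

theorem IsAcyclic.card_edgeFinset_add_card_connectedComponent_s7 {B : SimpleGraph V}
    (hB : B.IsAcyclic) : #B.edgeFinset + Nat.card B.ConnectedComponent = Fintype.card V := by
  rw [← sum_inducedEdgeCount_supp, ← sum_card_supp_toFinset, Nat.card_eq_fintype_card,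
    ← card_univ, card_eq_sum_ones, ← sum_add_distrib]
  exact sum_congr rfl fun C _ => hB.inducedEdgeCount_supp_add_one C

theorem IsAcyclic.inducedEdgeCount_add_one_le {T : SimpleGraph V} (hT : T.IsAcyclic)
    {S : Finset V} (hS : S.Nonempty) : inducedEdgeCount T S + 1 ≤ #S := by
  have hforest := (hT.induce (S : Set V)).card_edgeFinset_add_card_connectedComponent_s7
  have : Nonempty (S : Set V) := hS.to_subtype
  have hcomp : 0 < Nat.card (T.induce (S : Set V)).ConnectedComponent :=
    Nat.card_pos_iff.mpr ⟨⟨(T.induce _).connectedComponentMk this.some⟩, inferInstance⟩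
  rw [card_edgeFinset_induce] at hforest
  simp only [SetLike.coe_sort_coe, Fintype.card_coe, toFinset_coe] at hforest
  omega

theorem inducedEdgeCount_pos {G : SimpleGraph V} {S : Finset V} (hS : 2 ≤ #S)
    (hconn : (G.induce (S : Set V)).Connected) : 0 < inducedEdgeCount G S := by
  have h := hconn.card_vert_le_card_edgeSet_add_one
  rw [Nat.card_eq_fintype_card, Nat.card_eq_fintype_card, ← edgeFinset_card,
    card_edgeFinset_induce] at h
  simp only [SetLike.coe_sort_coe, Fintype.card_coe, toFinset_coe] at h
  omega

theorem inducedEdgeCount_mono {K G : SimpleGraph V} (hK : K ≤ G) (S : Finset V) :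
    inducedEdgeCount K S ≤ inducedEdgeCount G S :=
  card_le_card (filter_subset_filter _ (edgeFinset_mono hK))

theorem two_le_card_of_inducedEdgeCount_ne_zero {K : SimpleGraph V} {S : Finset V}
    (h : inducedEdgeCount K S ≠ 0) : 2 ≤ #S := by
  obtain ⟨e, he⟩ := card_ne_zero.mp h
  rw [mem_filter] at he
  induction e using Sym2.ind with
  | _ a b =>
    have hab : K.Adj a b := mem_edgeFinset.mp he.1
    exact one_lt_card.mpr ⟨a, he.2 a (Sym2.mem_mk_left a b), b, he.2 b (Sym2.mem_mk_right a b),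
      hab.ne⟩

section RankBound

variable {G : SimpleGraph V} {t : ℝ}

theorem mul_inducedEdgeCount_supp_add_one_le (ht : 0 ≤ t)
    (hmin : ∀ S : Finset V, 2 ≤ #S → (G.induce (S : Set V)).Connected →
      t * inducedEdgeCount G S ≤ #S - 1)
    {K : SimpleGraph V} (hK : K ≤ G) (C : K.ConnectedComponent) :
    t * inducedEdgeCount K C.supp.toFinset + 1 ≤ #C.supp.toFinset := by
  set S := C.supp.toFinset
  by_cases hS : inducedEdgeCount K S = 0
  · have : (1 : ℝ) ≤ #S := by
      exact_mod_cast card_pos.mpr (Set.toFinset_nonempty.mpr C.nonempty_supp)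
    simp [hS, this]
  · have hconn : (G.induce (S : Set V)).Connected :=
      (induce_supp_toFinset_connected K C).mono fun _ _ h => hK h
    calc t * inducedEdgeCount K S + 1 ≤ t * inducedEdgeCount G S + 1 := by
          gcongr
          exact inducedEdgeCount_mono hK S
      _ ≤ #S := by linarith [hmin S (two_le_card_of_inducedEdgeCount_ne_zero hS) hconn]

theorem mul_card_edgeFinset_add_card_connectedComponent_le (ht : 0 ≤ t)
    (hmin : ∀ S : Finset V, 2 ≤ #S → (G.induce (S : Set V)).Connected →
      t * inducedEdgeCount G S ≤ #S - 1)
    {K : SimpleGraph V} (hK : K ≤ G) :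
    t * #K.edgeFinset + Nat.card K.ConnectedComponent ≤ Fintype.card V := by
  rw [← sum_inducedEdgeCount_supp, ← sum_card_supp_toFinset, Nat.card_eq_fintype_card,
    ← card_univ, card_eq_sum_ones]
  push_cast
  rw [mul_sum, ← sum_add_distrib]
  exact sum_le_sum fun C _ => mul_inducedEdgeCount_supp_add_one_le ht hmin hK C

end RankBound

section Greedy

variable {G : SimpleGraph V} {t : ℝ}

theorem mul_card_edgeFinset_le_of_isAcyclic_reachable_eq
    (hrank : ∀ K ≤ G,
      t * #K.edgeFinset + Nat.card K.ConnectedComponent ≤ Fintype.card V)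
    {B K : SimpleGraph V} (hKG : K ≤ G) (hB : B.IsAcyclic) (hBK : B.Reachable = K.Reachable) :
    t * #K.edgeFinset ≤ #B.edgeFinset := by
  have hforest := hB.card_edgeFinset_add_card_connectedComponent_s7
  rw [card_connectedComponent_eq_of_reachable_eq hBK] at hforest
  have := hrank K hKG
  rw [← hforest] at this
  push_cast at this
  linarith

theorem Connected.exists_isTree_mul_totalWeight_le_of_eq_const (hG : G.Connected)
    (hrank : ∀ K ≤ G,
      t * #K.edgeFinset + Nat.card K.ConnectedComponent ≤ Fintype.card V)
    {w : Sym2 V → ℝ} {c : ℝ} (hc : 0 ≤ c) (hwc : ∀ e ∈ G.edgeFinset, w e = c)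
    {H : SimpleGraph V} (hHG : H ≤ G) (hH : H.IsAcyclic) :
    ∃ T, H ≤ T ∧ T ≤ G ∧ T.IsTree ∧
      t * totalWeight G w ≤ ∑ e ∈ T.edgeFinset, w e := by
  obtain ⟨T, hHT, hTG, hT⟩ := hG.exists_isTree_le_of_le_of_isAcyclic hHG hH
  refine ⟨T, hHT, hTG, hT, ?_⟩
  have hGrank := hrank G le_rfl
  rw [hG.card_connectedComponent, ← hT.card_edgeFinset] at hGrank
  push_cast at hGrank
  rw [totalWeight, sum_congr rfl hwc, sum_congr rfl fun e he => hwc e (edgeFinset_mono hTG he),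
    sum_const, sum_const, nsmul_eq_mul, nsmul_eq_mul]
  nlinarith

theorem exists_isTree_mul_totalWeight_le_of_truncation
    (hrank : ∀ K ≤ G,
      t * #K.edgeFinset + Nat.card K.ConnectedComponent ≤ Fintype.card V)
    {w : Sym2 V → ℝ} {c m : ℝ} (hmc : m ≤ c)
    (hw : ∀ e ∈ G.edgeFinset, w e ≤ m ∨ w e = c)
    {H : SimpleGraph V} (hHG : H ≤ G) (hH : H.IsAcyclic) (hHc : ∀ e ∈ H.edgeSet, w e = c)
    (htrunc : ∀ B, H ≤ B → B ≤ G → B.IsAcyclic → (∀ e ∈ B.edgeSet, w e = c) →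
      ∃ T, B ≤ T ∧ T ≤ G ∧ T.IsTree ∧
        t * totalWeight G (fun e => min (w e) m) ≤ ∑ e ∈ T.edgeFinset, min (w e) m) :
    ∃ T, H ≤ T ∧ T ≤ G ∧ T.IsTree ∧
      t * totalWeight G w ≤ ∑ e ∈ T.edgeFinset, w e := by
  obtain ⟨K, hKG, hKE⟩ : ∃ K ≤ G, K.edgeSet = {e ∈ G.edgeSet | w e = c} :=
    ⟨G.deleteEdges {e | w e ≠ c}, deleteEdges_le _, by ext; simp [edgeSet_deleteEdges]⟩
  have hKc : ∀ e ∈ K.edgeSet, w e = c := fun e he => (hKE ▸ he).2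
  have hHK : H ≤ K := fun a b hab => by
    rw [← mem_edgeSet, hKE]
    exact ⟨hHG hab, hHc _ hab⟩
  obtain ⟨B, hHB, hBK, hB, hBreach⟩ :=
    K.exists_isAcyclic_reachable_eq_le_of_le_of_isAcyclic hHK hH
  obtain ⟨T, hBT, hTG, hT, hTw⟩ :=
    htrunc B hHB (hBK.trans hKG) hB fun e he => hKc e (edgeSet_mono hBK he)
  refine ⟨T, hHB.trans hBT, hTG, hT, ?_⟩
  have hlayer : t * #K.edgeFinset ≤ #B.edgeFinset :=
    mul_card_edgeFinset_le_of_isAcyclic_reachable_eq hrank hKG hB hBreach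
  have hKE' : K.edgeFinset = G.edgeFinset.filter (w · = c) := by
    ext e
    simp [hKE]
  have hBT' : #B.edgeFinset ≤ #(T.edgeFinset.filter (w · = c)) :=
    card_le_card fun e he => mem_filter.mpr ⟨edgeFinset_mono hBT he,
      hKc e (edgeSet_mono hBK (mem_edgeFinset.mp he))⟩
  rw [totalWeight, sum_eq_sum_min_add_mul_card_filter _ hmc hw, ← hKE',
    sum_eq_sum_min_add_mul_card_filter _ hmc fun e he => hw e (edgeFinset_mono hTG he)]
  have hBT'' : (#B.edgeFinset : ℝ) ≤ #(T.edgeFinset.filter (w · = c)) := by exact_mod_cast hBT'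
  have hcm : 0 ≤ c - m := sub_nonneg.mpr hmc
  calc t * (∑ e ∈ G.edgeFinset, min (w e) m + (c - m) * #K.edgeFinset)
      = t * totalWeight G (fun e => min (w e) m) + (c - m) * (t * #K.edgeFinset) := by
        rw [totalWeight]; ring
    _ ≤ _ := add_le_add hTw (mul_le_mul_of_nonneg_left (hlayer.trans hBT'') hcm)

theorem Connected.exists_isTree_mul_totalWeight_le_of_isAcyclic (hG : G.Connected)
    (hrank : ∀ K ≤ G,
      t * #K.edgeFinset + Nat.card K.ConnectedComponent ≤ Fintype.card V)
    {w : Sym2 V → ℝ} (hw : ∀ e ∈ G.edgeFinset, 0 ≤ w e)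
    {H : SimpleGraph V} (hHG : H ≤ G) (hH : H.IsAcyclic)
    (hHw : ∀ e ∈ H.edgeSet, ∀ e' ∈ G.edgeFinset, w e' ≤ w e) :
    ∃ T, H ≤ T ∧ T ≤ G ∧ T.IsTree ∧
      t * totalWeight G w ≤ ∑ e ∈ T.edgeFinset, w e := by
  induction hn : #(G.edgeFinset.image w) using Nat.strong_induction_on generalizing w H with
  | _ n ih =>
  obtain hn1 | hn1 := le_or_gt n 1
  · obtain ⟨c, hc, hwc⟩ : ∃ c, 0 ≤ c ∧ ∀ e ∈ G.edgeFinset, w e = c := by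
      rcases G.edgeFinset.eq_empty_or_nonempty with hE | ⟨e₀, he₀⟩
      · exact ⟨0, le_rfl, by simp [hE]⟩
      · exact ⟨w e₀, hw e₀ he₀, fun e he => card_le_one.mp (hn ▸ hn1) _
          (mem_image_of_mem w he) _ (mem_image_of_mem w he₀)⟩
    exact hG.exists_isTree_mul_totalWeight_le_of_eq_const hrank hc hwc hHG hH
  set values := G.edgeFinset.image w
  have hne : values.Nonempty := card_pos.mp (by omega)
  set c := values.max' hne
  have hne' : (values.erase c).Nonempty := by
    rw [← card_pos, card_erase_of_mem (max'_mem _ _)]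
    omega
  set m := (values.erase c).max' hne'
  have hmvals : m ∈ values.erase c := max'_mem _ _
  have hm : 0 ≤ m := by
    obtain ⟨e, he, hwe⟩ := mem_image.mp (mem_of_mem_erase hmvals)
    exact hwe ▸ hw e he
  have hmc : m < c :=
    lt_of_le_of_ne (le_max' _ _ (mem_of_mem_erase hmvals)) (ne_of_mem_erase hmvals)
  have hle : ∀ e ∈ G.edgeFinset, w e ≤ m ∨ w e = c := fun e he =>
    or_iff_not_imp_right.mpr fun h => le_max' _ _ (mem_erase.mpr ⟨h, mem_image_of_mem w he⟩)
  have hHc : ∀ e ∈ H.edgeSet, w e = c := fun e he => by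
    obtain ⟨e₀, he₀, hwe₀⟩ := mem_image.mp (max'_mem values hne)
    have heG : e ∈ G.edgeFinset := edgeFinset_mono hHG (mem_edgeFinset.mpr he)
    exact le_antisymm (le_max' _ _ (mem_image_of_mem w heG))
      (hwe₀.symm.le.trans (hHw e he e₀ he₀))
  refine exists_isTree_mul_totalWeight_le_of_truncation hrank hmc.le hle hHG hH hHc
    fun B hHB hBG hB hBc => ?_
  have himage : G.edgeFinset.image (fun e => min (w e) m) ⊆ values.erase c := by
    intro x hx
    obtain ⟨e, he, rfl⟩ := mem_image.mp hx
    rcases hle e he with h | h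
    · rw [min_eq_left h]
      exact mem_erase.mpr ⟨(h.trans_lt hmc).ne, mem_image_of_mem w he⟩
    · rwa [min_eq_right (h ▸ hmc.le)]
  have hlt : #(G.edgeFinset.image fun e => min (w e) m) < n :=
    (card_le_card himage).trans_lt (by rw [card_erase_of_mem (max'_mem _ _)]; omega)
  obtain ⟨T, hBT, hTG, hT, hTw⟩ := ih _ hlt (fun e he => le_min (hw e he) hm) hBG hB
    (fun e he e' _ =>
      (min_le_right _ _).trans (min_eq_right (hmc.le.trans_eq (hBc e he).symm)).ge) rfl
  exact ⟨T, hBT, hTG, hT, hTw⟩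

end Greedy

end SimpleGraph

section MaxTreeWeight

variable {V : Type*} [Fintype V] {G : SimpleGraph V} {w : Sym2 V → ℝ}

theorem le_maxTreeWeight {T : SimpleGraph V} (hTG : T ≤ G) (hT : T.IsTree) :
    ∑ e ∈ T.edgeFinset, w e ≤ maxTreeWeight G w := by
  have hfin := (G.edgeFinset.powerset.image fun s => ∑ e ∈ s, w e).finite_toSet
  refine le_csSup (hfin.subset ?_).bddAbove ⟨T, hTG, hT, rfl⟩
  rintro _ ⟨T', hT'G, -, rfl⟩
  exact mem_image.mpr ⟨T'.edgeFinset, mem_powerset.mpr (SimpleGraph.edgeFinset_mono hT'G), rfl⟩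

theorem maxTreeWeight_le (hG : G.Connected) {x : ℝ}
    (h : ∀ T ≤ G, T.IsTree → ∑ e ∈ T.edgeFinset, w e ≤ x) :
    maxTreeWeight G w ≤ x := by
  obtain ⟨T, hTG, hT⟩ := hG.exists_isTree_le
  refine csSup_le ⟨_, T, hTG, hT, rfl⟩ ?_
  rintro _ ⟨T', hT'G, hT', rfl⟩
  exact h T' hT'G hT'

theorem mul_totalWeight_le_maxTreeWeight {t : ℝ} (hG : G.Connected)
    (hrank : ∀ K ≤ G,
      t * #K.edgeFinset + Nat.card K.ConnectedComponent ≤ Fintype.card V)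
    (hw : ∀ e ∈ G.edgeFinset, 0 ≤ w e) : t * totalWeight G w ≤ maxTreeWeight G w := by
  obtain ⟨T, -, hTG, hT, hTw⟩ := hG.exists_isTree_mul_totalWeight_le_of_isAcyclic hrank hw
    bot_le SimpleGraph.isAcyclic_bot (by simp)
  exact hTw.trans (le_maxTreeWeight hTG hT)

end MaxTreeWeight

open SimpleGraph in
theorem isLeast_ratio_of_forall_le {V : Type*} [Fintype V] {G : SimpleGraph V}
    (hG : G.Connected) {S : Finset V} (hS : 2 ≤ #S) (hSconn : (G.induce (S : Set V)).Connected)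
    (hmin : ∀ S' : Finset V, 2 ≤ #S' → (G.induce (S' : Set V)).Connected →
      ((#S : ℝ) - 1) / inducedEdgeCount G S ≤ ((#S' : ℝ) - 1) / inducedEdgeCount G S') :
    IsLeast
      {x | ∃ w : Sym2 V → ℝ, (∀ e ∈ G.edgeFinset, 0 ≤ w e) ∧ 0 < totalWeight G w ∧
        x = maxTreeWeight G w / totalWeight G w}
      (((#S : ℝ) - 1) / inducedEdgeCount G S) := by
  set t := ((#S : ℝ) - 1) / inducedEdgeCount G S
  have hpos : (0 : ℝ) < inducedEdgeCount G S := by exact_mod_cast inducedEdgeCount_pos hS hSconn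
  have hS' : (2 : ℝ) ≤ #S := by exact_mod_cast hS
  have ht : 0 ≤ t := div_nonneg (by linarith) hpos.le
  have hrank : ∀ K ≤ G, t * #K.edgeFinset + Nat.card K.ConnectedComponent ≤ Fintype.card V :=
    fun K => mul_card_edgeFinset_add_card_connectedComponent_le ht fun S' h1 h2 =>
      (le_div_iff₀ (by exact_mod_cast inducedEdgeCount_pos h1 h2)).mp (hmin S' h1 h2)
  set w₀ : Sym2 V → ℝ := fun e => if ∀ v ∈ e, v ∈ S then 1 else 0
  have hw₀ : ∀ e ∈ G.edgeFinset, 0 ≤ w₀ e := fun e _ => by positivity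
  have hsum : ∀ K : SimpleGraph V, ∑ e ∈ K.edgeFinset, w₀ e = inducedEdgeCount K S :=
    fun K => by rw [sum_boole]; rfl
  have hM : maxTreeWeight G w₀ = #S - 1 := by
    refine le_antisymm (maxTreeWeight_le hG fun T _ hT => ?_) ?_
    · have := hT.isAcyclic.inducedEdgeCount_add_one_le (card_pos.mp (by omega : 0 < #S))
      rw [hsum, le_sub_iff_add_le]
      exact_mod_cast this
    · have := mul_totalWeight_le_maxTreeWeight hG hrank hw₀
      rwa [totalWeight, hsum, div_mul_cancel₀ _ hpos.ne'] at this
  refine ⟨⟨w₀, hw₀, by rwa [totalWeight, hsum], by rw [hM, totalWeight, hsum]⟩, ?_⟩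
  rintro _ ⟨w, hw, hwpos, rfl⟩
  exact (le_div_iff₀ hwpos).mpr (mul_totalWeight_le_maxTreeWeight hG hrank hw)

/-- For a finite simple connected graph `G` with at least two vertices, the infimum of
the weighting ratio `t_w(G)` over all nonnegative edge-weight functions `w` with
positive total weight equals `min_{S ∈ Co(G)} (|S| - 1)/e(G[S])`, and both the
infimum and the minimum are attained. -/
theorem inf_ratio_eq_min_connected_subsets {V : Type*} [Fintype V]
    (G : SimpleGraph V) (hG : G.Connected) (hV : 2 ≤ Fintype.card V) :
    ∃ S : Finset V, 2 ≤ S.card ∧ (G.induce (S : Set V)).Connected ∧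
      IsLeast
        {x | ∃ w : Sym2 V → ℝ, (∀ e ∈ G.edgeFinset, 0 ≤ w e) ∧ 0 < totalWeight G w ∧
          x = maxTreeWeight G w / totalWeight G w}
        (((S.card : ℝ) - 1) / (inducedEdgeCount G S : ℝ)) ∧
      (∀ S' : Finset V, 2 ≤ S'.card → (G.induce (S' : Set V)).Connected →
        ((S.card : ℝ) - 1) / (inducedEdgeCount G S : ℝ) ≤
          ((S'.card : ℝ) - 1) / (inducedEdgeCount G S' : ℝ)) := by
  set connectedSubsets :=
    univ.filter fun S : Finset V => 2 ≤ #S ∧ (G.induce (S : Set V)).Connected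
  have huniv : univ ∈ connectedSubsets := by
    refine mem_filter.mpr ⟨mem_univ _, by rwa [card_univ], ?_⟩
    rw [coe_univ]
    exact (SimpleGraph.induceUnivIso G).connected_iff.mpr hG
  obtain ⟨S, hS, hSmin⟩ := exists_min_image connectedSubsets
    (fun S => ((#S : ℝ) - 1) / inducedEdgeCount G S) ⟨_, huniv⟩
  obtain ⟨-, hS2, hSconn⟩ := mem_filter.mp hS
  have hmin : ∀ S' : Finset V, 2 ≤ #S' → (G.induce (S' : Set V)).Connected →
      ((#S : ℝ) - 1) / inducedEdgeCount G S ≤ ((#S' : ℝ) - 1) / inducedEdgeCount G S' :=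
    fun S' h1 h2 => hSmin S' (mem_filter.mpr ⟨mem_univ _, h1, h2⟩)
  exact ⟨S, hS2, hSconn, isLeast_ratio_of_forall_le hG hS2 hSconn hmin, hmin⟩
end
end

section
/- Let G be a finite simple connected chordal graph with at least two vertices and let s be the clique number of G (so s ≥ 2). Then 1/(s − 1) ≤ min over S ∈ Co(G) of (|S| − 1)/e(G[S]) ≤ 2/s. Equivalently, the infimum over all nonnegative, not identically zero edge-weight functions ω of the weighting ratio t_ω(G) lies between 1/(s − 1) and 2/s. -/
open scoped Classical

noncomputable section

/-- A simple graph is chordal if it has no induced cycle of length at least 4. -/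
def IsChordal {V : Type*} (G : SimpleGraph V) : Prop :=
  ∀ n : ℕ, 4 ≤ n → IsEmpty (SimpleGraph.cycleGraph n ↪g G)

/-!
The lower bound rests on Dirac's theorem that every vertex set `S` of a chordal graph has a
simplicial vertex `v`, one whose neighbours in `S` form a clique. Together with `v` they form a
clique of at most `s` vertices, so deleting `v` removes at most `s - 1` edges. By induction `e(G[S]) ≤ (s - 1)(|S| - 1)`, while
`e(G[S]) ≥ |S| - 1 > 0` when `G[S]` is connected. Simplicial vertices come from clique separators:
two common neighbours of `a` that are joined through the component of `b` in the complement of the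
closed neighbourhood of `a` must be adjacent, or a shortest such connection closes an induced cycle
through `a` of length at least four.

The upper bound is attained by an `s`-clique `K`: `(|K| - 1)/e(G[K]) = (s - 1)/binom(s, 2) = 2/s`.
-/

open Finset

namespace SimpleGraph

variable {V : Type*} {G : SimpleGraph V}

lemma cycleGraph_adj_iff_val {n : ℕ} (hn : 2 ≤ n) {u v : Fin n} :
    (cycleGraph n).Adj u v ↔
      u.val + 1 = v.val ∨ v.val + 1 = u.val ∨ u.val + 1 = v.val + n ∨ v.val + 1 = u.val + n := by
  have key : ∀ x y : Fin n, (x - y).val = 1 ↔ y.val + 1 = x.val ∨ y.val + 1 = x.val + n := by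
    intro x y
    have hx := x.isLt
    have hy := y.isLt
    rw [Fin.val_sub]
    by_cases h : n - y.val + x.val < n
    · rw [Nat.mod_eq_of_lt h]
      omega
    · rw [Nat.mod_eq_sub_mod (by omega), Nat.mod_eq_of_lt (by omega)]
      omega
  rw [cycleGraph_adj', key, key]
  omega

lemma nonempty_cycleGraph_embedding {n : ℕ} (hn : 2 ≤ n) (f : ℕ → V)
    (hinj : ∀ i < n, ∀ j < n, f i = f j → i = j)
    (hadj : ∀ i < n, ∀ j < n, G.Adj (f i) (f j) ↔
      i + 1 = j ∨ j + 1 = i ∨ i + 1 = j + n ∨ j + 1 = i + n) :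
    Nonempty (cycleGraph n ↪g G) :=
  ⟨⟨⟨fun i => f i, fun i j h => Fin.ext (hinj i i.isLt j j.isLt h)⟩,
    fun {i j} => (hadj i i.isLt j j.isLt).trans (cycleGraph_adj_iff_val hn).symm⟩⟩

namespace Walk

variable {x y : V}

lemma IsPath.adj_getVert_iff {p : G.Walk x y} (hp : p.IsPath) (hc : p.IsChordless) {i j : ℕ}
    (hi : i ≤ p.length) (hj : j ≤ p.length) :
    G.Adj (p.getVert i) (p.getVert j) ↔ i + 1 = j ∨ j + 1 = i := by
  constructor
  · intro hadj
    obtain ⟨k, hk, hkij⟩ := (mk_mem_edges_iff_exists p).1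
      (hc.mem_edges (p.getVert_mem_support i) (p.getVert_mem_support j) hadj)
    have hinj := hp.getVert_injOn
    rcases Sym2.eq_iff.1 hkij with ⟨h₁, h₂⟩ | ⟨h₁, h₂⟩
    · have := hinj (show k ≤ p.length by omega) hi h₁
      have := hinj (show k + 1 ≤ p.length by omega) hj h₂
      omega
    · have := hinj (show k ≤ p.length by omega) hj h₁
      have := hinj (show k + 1 ≤ p.length by omega) hi h₂
      omega
  · rintro (rfl | rfl)
    · exact p.adj_getVert_succ (by omega)
    · exact (p.adj_getVert_succ (by omega)).symm

/-- A shortest walk inside `W` does the job: a chord or a repeated vertex would give a shortcut. -/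
lemma exists_isPath_isChordless (W : Set V) (p : G.Walk x y) (hp : ∀ v ∈ p.support, v ∈ W) :
    ∃ q : G.Walk x y, q.IsPath ∧ q.IsChordless ∧ ∀ v ∈ q.support, v ∈ W := by
  obtain ⟨q, hqW, hmin⟩ := (measure (Walk.length (G := G) (u := x) (v := y))).wf.has_min
    {r | ∀ v ∈ r.support, v ∈ W} ⟨p, hp⟩
  have hpath : q.bypass = q := q.bypass_eq_self_of_length_le_length_bypass <| not_lt.1 fun h =>
    hmin _ (fun v hv => hqW v (q.support_bypass_subset_support hv)) h
  have hshort : ∀ i j, i < j → j ≤ q.length → G.Adj (q.getVert i) (q.getVert j) → j = i + 1 := by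
    intro i j hij hj hadj
    by_contra hne
    refine hmin ((q.take i).append (cons hadj (q.drop j))) (fun v hv => hqW v ?_) ?_
    · rw [mem_support_append_iff, support_cons, List.mem_cons, support_take,
        drop_support_eq_support_drop_min] at hv
      rcases hv with hv | rfl | hv
      · exact List.mem_of_mem_take hv
      · exact q.getVert_mem_support i
      · exact List.mem_of_mem_drop hv
    · change _ < q.length
      simp only [length_append, length_cons, take_length, drop_length]
      omega
  refine ⟨q, hpath ▸ q.bypass_isPath, isChordless_iff_forall_mem_edges.2 ?_, hqW⟩
  intro u v hu hv hadj
  obtain ⟨i, rfl, hi⟩ := mem_support_iff_exists_getVert.1 hu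
  obtain ⟨j, rfl, hj⟩ := mem_support_iff_exists_getVert.1 hv
  rw [mk_mem_edges_iff_exists]
  rcases lt_trichotomy i j with h | rfl | h
  · exact ⟨i, by omega, by rw [← hshort i j h hj hadj]⟩
  · exact absurd hadj G.irrefl
  · exact ⟨j, by omega, by rw [← hshort j i h hi hadj.symm, Sym2.eq_swap]⟩

end Walk

lemma IsClique.card_le_of_cliqueFree {K : Finset V} {n : ℕ} (hK : G.IsClique (K : Set V))
    (h : G.CliqueFree (n + 1)) : #K ≤ n := by
  by_contra! hn
  obtain ⟨L, hLK, hL⟩ := exists_subset_card_eq hn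
  exact h L ⟨hK.subset (by simpa using hLK), hL⟩

lemma IsClique.inducedEdgeCount_eq [Fintype V] {K : Finset V} (hK : G.IsClique (K : Set V)) :
    inducedEdgeCount G K = (#K).choose 2 := by
  rw [← Sym2.card_image_offDiag, inducedEdgeCount]
  congr 1
  ext e
  induction e using Sym2.ind with | _ x y => ?_
  simp only [mem_filter, mem_image, mem_edgeFinset, mem_edgeSet, Sym2.mem_iff, forall_eq_or_imp,
    forall_eq, mem_offDiag, Prod.exists, Function.uncurry_apply_pair, Sym2.eq_iff]
  constructor
  · rintro ⟨hxy, hx, hy⟩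
    exact ⟨x, y, ⟨hx, hy, hxy.ne⟩, Or.inl ⟨rfl, rfl⟩⟩
  · rintro ⟨a, b, ⟨ha, hb, hab⟩, ⟨rfl, rfl⟩ | ⟨rfl, rfl⟩⟩
    exacts [⟨hK ha hb hab, ha, hb⟩, ⟨hK hb ha (Ne.symm hab), hb, ha⟩]

end SimpleGraph

section Chordal

open SimpleGraph

variable {V : Type*} {G : SimpleGraph V}

/-- The path closes up through `a` into an induced cycle of length `p.length + 2`. -/
theorem IsChordal.length_le_one_of_isChordless (hch : IsChordal G) {a x y : V}
    {p : G.Walk x y} (hp : p.IsPath) (hc : p.IsChordless) (hax : G.Adj a x) (hay : G.Adj a y)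
    (hinner : ∀ i, 0 < i → i < p.length → p.getVert i ≠ a ∧ ¬ G.Adj a (p.getVert i)) :
    p.length ≤ 1 := by
  by_contra! hlen
  have hapex : ∀ i ≤ p.length,
      p.getVert i ≠ a ∧ (G.Adj (p.getVert i) a ↔ i = 0 ∨ i = p.length) := by
    intro i hi
    rcases Nat.eq_zero_or_pos i with rfl | hi₀
    · simpa using ⟨hax.ne', hax.symm⟩
    rcases hi.lt_or_eq with hi' | rfl
    · have := hinner i hi₀ hi'
      exact ⟨this.1, iff_of_false (by rw [adj_comm]; exact this.2) (by omega)⟩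
    · simpa using ⟨hay.ne', hay.symm⟩
  refine (hch (p.length + 2) (by omega)).false (nonempty_cycleGraph_embedding (by omega)
    (fun i => if i ≤ p.length then p.getVert i else a) ?_ ?_).some
  · intro i hi j hj hij
    by_cases hi' : i ≤ p.length <;> by_cases hj' : j ≤ p.length <;>
      simp only [hi', hj', if_true, if_false] at hij
    · exact hp.getVert_injOn hi' hj' hij
    · exact absurd hij (hapex i hi').1
    · exact absurd hij.symm (hapex j hj').1
    · omega
  · intro i hi j hj
    by_cases hi' : i ≤ p.length <;> by_cases hj' : j ≤ p.length <;>
      simp only [hi', hj', if_true, if_false]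
    · rw [hp.adj_getVert_iff hc hi' hj']
      omega
    · rw [(hapex i hi').2]
      omega
    · rw [adj_comm, (hapex j hj').2]
      omega
    · simp only [SimpleGraph.irrefl, false_iff]
      omega

theorem IsChordal.adj_of_walk_avoiding_closedNbhd (hch : IsChordal G) {a t₁ t₂ : V} (R : Set V)
    (hR : ∀ v ∈ R, v ≠ a ∧ ¬ G.Adj a v) (h₁ : G.Adj a t₁) (h₂ : G.Adj a t₂) (hne : t₁ ≠ t₂)
    (p : G.Walk t₁ t₂) (hp : ∀ v ∈ p.support, v = t₁ ∨ v = t₂ ∨ v ∈ R) : G.Adj t₁ t₂ := by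
  obtain ⟨q, hq, hqc, hqR⟩ := p.exists_isPath_isChordless {v | v = t₁ ∨ v = t₂ ∨ v ∈ R} hp
  have hinner : ∀ i, 0 < i → i < q.length → q.getVert i ≠ a ∧ ¬ G.Adj a (q.getVert i) := by
    intro i hi₀ hi
    refine hR _ (((hqR _ (q.getVert_mem_support i)).resolve_left ?_).resolve_left ?_)
    · rw [hq.getVert_eq_start_iff hi.le]
      omega
    · rw [hq.getVert_eq_end_iff hi.le]
      omega
  have := hch.length_le_one_of_isChordless hq hqc h₁ h₂ hinner
  interval_cases h : q.length
  · exact absurd (q.eq_of_length_eq_zero h) hne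
  · exact q.adj_of_length_eq_one h

/-- The separator is `T = N(a) ∩ N(B)`, where `B` is the component of `b` in `S` minus the closed
neighbourhood of `a`. -/
theorem IsChordal.exists_clique_separator (hch : IsChordal G) {S : Finset V} {a b : V}
    (hb : b ∈ S) (hab : a ≠ b) (hnadj : ¬ G.Adj a b) :
    ∃ B T : Finset V, B ⊆ S ∧ T ⊆ S ∧ Disjoint B T ∧ G.IsClique (T : Set V) ∧ b ∈ B ∧
      a ∉ B ∪ T ∧ ∀ w ∈ B, ∀ u ∈ S, G.Adj w u → u ∈ B ∪ T := by
  set R : Finset V := {u ∈ S | u ≠ a ∧ ¬ G.Adj a u}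
  set B : Finset V := {u ∈ R | ∃ q : G.Walk b u, ∀ v ∈ q.support, v ∈ R}
  set T : Finset V := {t ∈ S | G.Adj a t ∧ ∃ w ∈ B, G.Adj t w}
  have hR : ∀ v ∈ R, v ≠ a ∧ ¬ G.Adj a v := fun v hv => (mem_filter.1 hv).2
  have hBR : B ⊆ R := filter_subset _ _
  have hbR : b ∈ R := mem_filter.2 ⟨hb, hab.symm, hnadj⟩
  refine ⟨B, T, hBR.trans (filter_subset _ _), filter_subset _ _,
    disjoint_left.2 fun v hvB hvT => (hR v (hBR hvB)).2 (mem_filter.1 hvT).2.1, ?_,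
    mem_filter.2 ⟨hbR, .nil, by simpa using hbR⟩, ?_, ?_⟩
  · intro t₁ ht₁ t₂ ht₂ hne
    obtain ⟨-, ha₁, w₁, hw₁, hw₁t⟩ := mem_filter.1 ht₁
    obtain ⟨-, ha₂, w₂, hw₂, hw₂t⟩ := mem_filter.1 ht₂
    obtain ⟨-, q₁, hq₁⟩ := mem_filter.1 hw₁
    obtain ⟨-, q₂, hq₂⟩ := mem_filter.1 hw₂
    refine hch.adj_of_walk_avoiding_closedNbhd R hR ha₁ ha₂ hne
      (.cons hw₁t (q₁.reverse.append (q₂.concat hw₂t.symm))) fun v hv => ?_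
    rw [Walk.support_cons, List.mem_cons, Walk.mem_support_append_iff, Walk.support_reverse,
      List.mem_reverse, Walk.support_concat, List.mem_append, List.mem_singleton] at hv
    rcases hv with rfl | hv | hv | rfl
    exacts [Or.inl rfl, Or.inr (Or.inr (hq₁ v hv)), Or.inr (Or.inr (hq₂ v hv)), Or.inr (Or.inl rfl)]
  · rw [mem_union, not_or]
    exact ⟨fun haB => (hR a (hBR haB)).1 rfl, fun haT => G.irrefl (mem_filter.1 haT).2.1⟩
  · intro w hw u hu hwu
    obtain ⟨hwR, q, hq⟩ := mem_filter.1 hw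
    by_cases hau : G.Adj a u
    · exact mem_union_right _ (mem_filter.2 ⟨hu, hau, w, hw, hwu.symm⟩)
    have huR : u ∈ R := mem_filter.2 ⟨hu, fun h => (hR w hwR).2 (h ▸ hwu.symm), hau⟩
    refine mem_union_left _ (mem_filter.2 ⟨huR, q.concat hwu, fun v hv => ?_⟩)
    rw [Walk.support_concat, List.mem_append, List.mem_singleton] at hv
    exact hv.elim (hq v) (· ▸ huR)

def IsSimplicialIn (G : SimpleGraph V) (S : Finset V) (v : V) : Prop :=
  G.IsClique {w | w ∈ S ∧ G.Adj v w}

lemma IsSimplicialIn.of_subset {S S' : Finset V} {v : V} (h : IsSimplicialIn G S' v)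
    (hS : ∀ u ∈ S, G.Adj v u → u ∈ S') : IsSimplicialIn G S v :=
  IsClique.subset (s := {w | w ∈ S' ∧ G.Adj v w}) (fun u hu => ⟨hS u hu.1 hu.2, hu.2⟩) h

lemma IsSimplicialIn.card_le_of_cliqueFree {S : Finset V} {v : V} {n : ℕ}
    (hv : IsSimplicialIn G S v) (h : G.CliqueFree (n + 1)) : #{w ∈ S | G.Adj v w} + 1 ≤ n := by
  rw [← card_insert_of_notMem (fun hv' => G.irrefl (mem_filter.1 hv').2)]
  refine IsClique.card_le_of_cliqueFree ?_ h
  rw [coe_insert, isClique_insert, coe_filter]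
  exact ⟨hv, fun w hw _ => hw.2⟩

/-- Dirac's lemma, strengthened to carry the induction. If `S` is not a clique, a clique separator
`T` of two non-adjacent vertices splits `S` into two sides `C`; inductively `C ∪ T` has a
simplicial vertex outside `T`, which lies in `C` and is simplicial in `S`. The two vertices so
obtained are non-adjacent, so they are not both in `K`. -/
theorem IsChordal.exists_isSimplicialIn_notMem (hch : IsChordal G) (S : Finset V) (K : Set V)
    (hK : G.IsClique K) (hSK : ¬ (S : Set V) ⊆ K) : ∃ v ∈ S, v ∉ K ∧ IsSimplicialIn G S v := by
  induction S using Finset.strongInduction generalizing K with | _ S ih => ?_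
  obtain ⟨x, hxS, hxK⟩ := Set.not_subset.1 hSK
  by_cases hS : G.IsClique (S : Set V)
  · exact ⟨x, hxS, hxK, hS.subset fun u hu => hu.1⟩
  obtain ⟨a, ha, b, hb, hab, hnadj⟩ : ∃ a ∈ S, ∃ b ∈ S, a ≠ b ∧ ¬ G.Adj a b := by
    simpa [isClique_iff, Set.Pairwise] using hS
  obtain ⟨B, T, hBS, hTS, hBT, hT, hbB, haBT, hB⟩ := hch.exists_clique_separator hb hab hnadj
  have side : ∀ C : Finset V, Disjoint C T → C ∪ T ⊂ S → C.Nonempty →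
      (∀ w ∈ C, ∀ u ∈ S, G.Adj w u → u ∈ C ∪ T) → ∃ v ∈ C, IsSimplicialIn G S v := by
    rintro C hCT hCTS ⟨c, hc⟩ hC
    obtain ⟨v, hv, hvT, hsimp⟩ := ih (C ∪ T) hCTS T hT
      fun h => disjoint_left.1 hCT hc (h (mem_union_left _ hc))
    have hvC := (mem_union.1 hv).resolve_right hvT
    exact ⟨v, hvC, hsimp.of_subset (hC v hvC)⟩
  set A := S \ (B ∪ T)
  have hA : ∀ w ∈ A, ∀ u ∈ S, G.Adj w u → u ∈ A ∪ T := by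
    intro w hw u hu hwu
    obtain ⟨hwS, hwBT⟩ := mem_sdiff.1 hw
    have huB : u ∉ B := fun huB => hwBT (hB u huB w hwS hwu.symm)
    rw [mem_union, mem_sdiff, mem_union]
    tauto
  have hbAT : b ∉ A ∪ T := by
    rw [mem_union, mem_sdiff, not_or, not_and_not_right]
    exact ⟨fun _ => mem_union_left _ hbB, disjoint_left.1 hBT hbB⟩
  obtain ⟨u, huA, hu⟩ := side A (disjoint_sdiff_self_left.mono_right subset_union_right)
    ((ssubset_iff_of_subset (union_subset sdiff_subset hTS)).2 ⟨b, hb, hbAT⟩)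
    ⟨a, mem_sdiff.2 ⟨ha, haBT⟩⟩ hA
  obtain ⟨w, hwB, hw⟩ := side B hBT
    ((ssubset_iff_of_subset (union_subset hBS hTS)).2 ⟨a, ha, haBT⟩) ⟨b, hbB⟩ hB
  have huw : u ≠ w ∧ ¬ G.Adj u w := by
    obtain ⟨huS, huBT⟩ := mem_sdiff.1 huA
    exact ⟨fun h => huBT (mem_union_left _ (h ▸ hwB)), fun h => huBT (hB w hwB u huS h.symm)⟩
  by_cases huK : u ∈ K
  · exact ⟨w, hBS hwB, fun hwK => huw.2 (hK huK hwK huw.1), hw⟩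
  · exact ⟨u, sdiff_subset huA, huK, hu⟩

variable [Fintype V]

lemma natCard_edgeSet_induce (S : Finset V) :
    Nat.card (G.induce (S : Set V)).edgeSet = inducedEdgeCount G S := by
  rw [Nat.card_eq_fintype_card, ← edgeFinset_card, inducedEdgeCount]
  convert (card_map _).symm.trans (congrArg card (map_edgeFinset_induce (G := G) (s := S)))
  ext e
  simp [mem_sym2_iff]

lemma inducedEdgeCount_eq_erase_add {S : Finset V} {v : V} (hv : v ∈ S) :
    inducedEdgeCount G S = inducedEdgeCount G (S.erase v) + #{w ∈ S | G.Adj v w} := by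
  rw [inducedEdgeCount, ← card_filter_add_card_filter_not (fun e => v ∉ e), filter_filter,
    filter_filter, inducedEdgeCount]
  congr 1
  · congr 1
    ext e
    simp only [mem_filter, mem_erase]
    grind
  · rw [← card_image_of_injective _
      (fun x y h => Sym2.congr_right.1 h : Function.Injective (s(v, ·)))]
    congr 1
    ext e
    induction e using Sym2.ind
    simp only [mem_filter, mem_image, mem_edgeFinset, mem_edgeSet, Sym2.mem_iff,
      forall_eq_or_imp, forall_eq, Sym2.eq_iff]
    grind [adj_comm, G.irrefl]

theorem IsChordal.inducedEdgeCount_le (hch : IsChordal G) {s : ℕ}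
    (hfree : G.CliqueFree (s + 1)) (S : Finset V) : inducedEdgeCount G S ≤ (s - 1) * (#S - 1) := by
  induction S using Finset.strongInduction with | _ S ih => ?_
  rcases S.eq_empty_or_nonempty with rfl | hS
  · simp [inducedEdgeCount, Sym2.forall]
  obtain ⟨v, hv, -, hsimp⟩ := hch.exists_isSimplicialIn_notMem S ∅ isClique_empty
    (by simpa using hS.ne_empty)
  have hdeg := hsimp.card_le_of_cliqueFree hfree
  have hdeg' : #{w ∈ S | G.Adj v w} ≤ #S - 1 := by
    rw [← card_erase_of_mem hv]
    exact card_le_card fun w hw =>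
      mem_erase.2 ⟨fun h => G.irrefl (h ▸ (mem_filter.1 hw).2), (mem_filter.1 hw).1⟩
  have hrest := ih _ (erase_ssubset hv)
  rw [card_erase_of_mem hv] at hrest
  rw [inducedEdgeCount_eq_erase_add hv]
  rcases Nat.eq_zero_or_pos (#S - 1) with h | h
  · rw [h] at hrest hdeg' ⊢
    simp only [Nat.zero_sub, mul_zero] at hrest ⊢
    omega
  · obtain ⟨k, hk⟩ : ∃ k, #S - 1 = k + 1 := ⟨#S - 2, by omega⟩
    rw [hk, Nat.add_sub_cancel] at hrest
    rw [hk, Nat.mul_succ]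
    omega

end Chordal

theorem chordal_ratio_bounds_general {V : Type*} [Fintype V] (G : SimpleGraph V)
    (hch : IsChordal G) (s : ℕ) (hs : 2 ≤ s)
    (hclique : ∃ K : Finset V, G.IsNClique s K) (hfree : G.CliqueFree (s + 1)) :
    (∀ S : Finset V, 2 ≤ S.card → (G.induce (S : Set V)).Connected →
        1 / ((s : ℝ) - 1) ≤ ((S.card : ℝ) - 1) / (inducedEdgeCount G S : ℝ)) ∧
      (∃ S : Finset V, 2 ≤ S.card ∧ (G.induce (S : Set V)).Connected ∧
        ((S.card : ℝ) - 1) / (inducedEdgeCount G S : ℝ) ≤ 2 / (s : ℝ)) := by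
  have hs' : (2 : ℝ) ≤ s := by exact_mod_cast hs
  constructor
  · intro S hS hconn
    have hspan := hconn.card_vert_le_card_edgeSet_add_one
    rw [natCard_edgeSet_induce, Nat.card_coe_set_eq, Set.ncard_coe_finset] at hspan
    have hS' : (2 : ℝ) ≤ #S := by exact_mod_cast hS
    have he : (1 : ℝ) ≤ inducedEdgeCount G S := by exact_mod_cast (by omega : 1 ≤ _)
    have hle : (inducedEdgeCount G S : ℝ) ≤ ((s : ℝ) - 1) * (#S - 1) := by
      rw [← Nat.cast_pred (by omega), ← Nat.cast_pred (by omega)]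
      exact_mod_cast hch.inducedEdgeCount_le hfree S
    rw [div_le_div_iff₀ (by linarith) (by linarith)]
    nlinarith
  · obtain ⟨K, hK⟩ := hclique
    have : Nonempty (K : Set V) := (card_pos.1 (by rw [hK.card_eq]; omega)).to_subtype
    refine ⟨K, hK.card_eq ▸ hs, ?_, ?_⟩
    · rw [SimpleGraph.induce_eq_top.2 hK.isClique]
      exact SimpleGraph.connected_top
    · have : (s : ℝ) - 1 ≠ 0 := by linarith
      rw [hK.isClique.inducedEdgeCount_eq, hK.card_eq, Nat.cast_choose_two]
      apply le_of_eq
      field_simp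

/-- For a connected chordal graph `G` with at least two vertices and clique number `s`
(so `s ≥ 2`), the minimum over `S ∈ Co(G)` of `(|S| - 1)/e(G[S])` — which by the
0-1 Weighting Function Lemma is the infimum of the weighting ratio `t_w(G)` — lies
between `1/(s - 1)` and `2/s`. -/
theorem chordal_ratio_bounds {V : Type*} [Fintype V] (G : SimpleGraph V)
    (hG : G.Connected) (hV : 2 ≤ Fintype.card V)
    (hch : IsChordal G) (s : ℕ) (hs : 2 ≤ s)
    (hclique : ∃ K : Finset V, G.IsNClique s K) (hfree : G.CliqueFree (s + 1)) :
    (∀ S : Finset V, 2 ≤ S.card → (G.induce (S : Set V)).Connected →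
        1 / ((s : ℝ) - 1) ≤ ((S.card : ℝ) - 1) / (inducedEdgeCount G S : ℝ)) ∧
      (∃ S : Finset V, 2 ≤ S.card ∧ (G.induce (S : Set V)).Connected ∧
        ((S.card : ℝ) - 1) / (inducedEdgeCount G S : ℝ) ≤ 2 / (s : ℝ)) :=
  chordal_ratio_bounds_general G hch s hs hclique hfree
end
end
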